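/- arXiv:2504.20971 — 5 statements merged into one kernel-verified Lean document; each statement's English description precedes it below -/
import Mathlib

section
/- For two bounded self-adjoint operators A, B on a Hilbert space, the Hausdorff distance between their spectra satisfies d_Hausdorff(spec A, spec B) ≤ ‖A − B‖. -/
/-!
For self-adjoint `b`, the continuous functional calculus gives `‖(μ - b)⁻¹‖ ≤ 1 / dist(μ, σ(b))`.
In any Banach algebra, a Neumann series shows that `μ - a` stays invertible whenever
`‖a - b‖ < 1 / ‖(μ - b)⁻¹‖`. Hence every point of `σ(a)` lies within `‖a - b‖` of `σ(b)`, and by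
symmetry the same holds with `a` and `b` exchanged.
-/

open Metric

/-- When `μ ∈ σ(b)` the resolvent is the junk value `0`, and the bound reads `0 ≤ ‖a - b‖`. -/
theorem spectrum.inv_norm_resolvent_le_norm_sub {R A : Type*} [CommSemiring R] [NormedRing A]
    [Algebra R A] [HasSummableGeomSeries A] {a b : A} {μ : R} (hμ : μ ∈ spectrum R a) :
    ‖resolvent b μ‖⁻¹ ≤ ‖a - b‖ := by
  by_cases hb : μ ∈ spectrum R b
  · simp [resolvent_zero_of_mem_spectrum hb]
  obtain ⟨u, hu⟩ := spectrum.notMem_iff.mp hb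
  by_contra! hlt
  refine hμ (u.ofNearby (algebraMap R A μ - a) ?_).isUnit
  rwa [hu, sub_sub_sub_cancel_left, norm_sub_rev, ← Ring.inverse_unit, hu]

section CStarAlgebra

variable {A : Type*} [CStarAlgebra A]

theorem IsSelfAdjoint.infDist_spectrum_le_inv_norm_resolvent {b : A} (hb : IsSelfAdjoint b)
    (μ : ℝ) : infDist μ (spectrum ℝ b) ≤ ‖resolvent b μ‖⁻¹ := by
  by_cases hμ : μ ∈ spectrum ℝ b
  · rw [infDist_zero_of_mem hμ]
    positivity
  nontriviality A
  have hd : 0 < infDist μ (spectrum ℝ b) :=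
    (spectrum.isClosed b).notMem_iff_infDist_pos
      (ContinuousFunctionalCalculus.spectrum_nonempty b hb) |>.mp hμ
  have hne : ∀ x ∈ spectrum ℝ b, μ - x ≠ 0 := fun x hx h => hμ (sub_eq_zero.mp h ▸ hx)
  have hres : resolvent b μ = cfc (fun x => (μ - x)⁻¹) b := by
    rw [resolvent, cfc_inv (μ - ·) b hne, cfc_sub (fun _ => μ) (fun x => x) b, cfc_const μ b,
      cfc_id' ℝ b]
  have hpos : 0 < ‖resolvent b μ‖ := by
    obtain ⟨u, hu⟩ := spectrum.notMem_iff.mp hμ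
    rw [resolvent, ← hu, Ring.inverse_unit]
    exact Units.norm_pos _
  rw [le_inv_comm₀ hd hpos, hres]
  refine norm_cfc_le (by positivity) fun x hx => ?_
  rw [norm_inv, ← dist_eq_norm]
  exact inv_anti₀ hd (infDist_le_dist_of_mem hx)

theorem IsSelfAdjoint.infDist_spectrum_le_norm_sub {a b : A} (hb : IsSelfAdjoint b) {μ : ℝ}
    (hμ : μ ∈ spectrum ℝ a) : infDist μ (spectrum ℝ b) ≤ ‖a - b‖ :=
  (hb.infDist_spectrum_le_inv_norm_resolvent μ).trans (spectrum.inv_norm_resolvent_le_norm_sub hμ)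

end CStarAlgebra

theorem hausdorffDist_spectrum_le_norm_sub
    {H : Type*} [NormedAddCommGroup H] [InnerProductSpace ℂ H] [CompleteSpace H]
    (A B : H →L[ℂ] H) (hA : IsSelfAdjoint A) (hB : IsSelfAdjoint B) :
    Metric.hausdorffDist (spectrum ℝ A) (spectrum ℝ B) ≤ ‖A - B‖ :=
  hausdorffDist_le_of_infDist (norm_nonneg _) (fun _ hμ => hB.infDist_spectrum_le_norm_sub hμ)
    fun _ hμ => norm_sub_rev A B ▸ hA.infDist_spectrum_le_norm_sub hμ
end

section
/- For compact, injective, self-adjoint operators R, R̃ with spectrum in [0,1] and ordered eigenvalue sequences (μ_k), (μ̃_k), the spectral distance d_SPEC(R,R̃) := sup_k |μ_k − μ̃_k| dominates the unitary distance: d_UNI(R,R̃) ≤ d_SPEC(R,R̃). -/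
/-! The unitary sending the eigenbasis `ψ` of `R` to the eigenbasis `ψ'` of `R'` turns
`R' - U R U*` into the diagonal operator with entries `μ' k - μ k`, whose norm is bounded by
`sup_k |μ k - μ' k|`. The eigenvalues are bounded by `‖R‖` and `‖R'‖`, so this supremum is not
a junk value. -/

noncomputable def conjOp {H H' : Type*} [NormedAddCommGroup H] [InnerProductSpace ℂ H]
    [NormedAddCommGroup H'] [InnerProductSpace ℂ H']
    (U : H ≃ₗᵢ[ℂ] H') (R : H →L[ℂ] H) : H' →L[ℂ] H' :=
  ((U.toContinuousLinearEquiv : H →L[ℂ] H').comp R).comp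
    (U.symm.toContinuousLinearEquiv : H' →L[ℂ] H)

/-- `dUNI R R'` is the infimum of `‖R' - U R U*‖` over all unitaries `U : H → H'`. -/
noncomputable def dUNI {H H' : Type*} [NormedAddCommGroup H] [InnerProductSpace ℂ H]
    [NormedAddCommGroup H'] [InnerProductSpace ℂ H']
    (R : H →L[ℂ] H) (R' : H' →L[ℂ] H') : ℝ :=
  sInf { d : ℝ | ∃ U : H ≃ₗᵢ[ℂ] H', d = ‖R' - conjOp U R‖ }

namespace HilbertBasis

variable {ι 𝕜 E F : Type*} [RCLike 𝕜] [NormedAddCommGroup E] [InnerProductSpace 𝕜 E]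
  [NormedAddCommGroup F] [InnerProductSpace 𝕜 F]

theorem repr_apply_eq_mul_of_apply_eq_smul (b : HilbertBasis ι 𝕜 E) {T : E →L[𝕜] E}
    {c : ι → 𝕜} (hT : ∀ i, T (b i) = c i • b i) (x : E) (i : ι) :
    b.repr (T x) i = c i * b.repr x i := by
  have hsum : HasSum (fun j => (b.repr x j * c j) • b j) (T x) := by
    simpa only [map_smul, hT, smul_smul] using (b.hasSum_repr x).mapL T
  have hcoord := hsum.mapL (innerSL 𝕜 (b i))
  simp only [innerSL_apply_apply, inner_smul_right] at hcoord
  rw [b.repr_apply_apply, hcoord.unique (hasSum_single i fun j hji => by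
    rw [b.orthonormal.inner_eq_zero hji.symm, mul_zero]),
    inner_self_eq_one_of_norm_eq_one (b.orthonormal.1 i), mul_one, mul_comm]

theorem opNorm_le_of_apply_eq_smul (b : HilbertBasis ι 𝕜 E) {T : E →L[𝕜] E} {c : ι → 𝕜}
    {M : ℝ} (hM : 0 ≤ M) (hT : ∀ i, T (b i) = c i • b i) (hc : ∀ i, ‖c i‖ ≤ M) :
    ‖T‖ ≤ M := by
  refine T.opNorm_le_bound hM fun x => ?_
  calc ‖T x‖ = ‖b.repr (T x)‖ := (b.repr.norm_map _).symm
    _ ≤ ‖(M : 𝕜) • b.repr x‖ := lp.norm_mono two_ne_zero fun i => by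
        rw [b.repr_apply_eq_mul_of_apply_eq_smul hT, lp.coeFn_smul, Pi.smul_apply, norm_smul,
          norm_mul, RCLike.norm_ofReal, abs_of_nonneg hM]
        exact mul_le_mul_of_nonneg_right (hc i) (norm_nonneg _)
    _ = M * ‖x‖ := by rw [norm_smul, RCLike.norm_ofReal, abs_of_nonneg hM, b.repr.norm_map]

theorem norm_le_opNorm_of_apply_eq_smul (b : HilbertBasis ι 𝕜 E) {T : E →L[𝕜] E} {c : 𝕜}
    {i : ι} (hT : T (b i) = c • b i) : ‖c‖ ≤ ‖T‖ := by
  simpa [hT, norm_smul, b.orthonormal.1 i] using T.le_opNorm (b i)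

theorem repr_trans_repr_symm_apply (b : HilbertBasis ι 𝕜 E) (b' : HilbertBasis ι 𝕜 F) (i : ι) :
    b.repr.trans b'.repr.symm (b i) = b' i := by
  classical
  rw [LinearIsometryEquiv.trans_apply, b.repr_self, b'.repr_symm_single]

end HilbertBasis

section UnitaryDistance

variable {H H' : Type*} [NormedAddCommGroup H] [InnerProductSpace ℂ H]
  [NormedAddCommGroup H'] [InnerProductSpace ℂ H']

theorem conjOp_apply_map (U : H ≃ₗᵢ[ℂ] H') (R : H →L[ℂ] H) (x : H) :
    conjOp U R (U x) = U (R x) := by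
  simp [conjOp]

theorem dUNI_le (R : H →L[ℂ] H) (R' : H' →L[ℂ] H') (U : H ≃ₗᵢ[ℂ] H') :
    dUNI R R' ≤ ‖R' - conjOp U R‖ :=
  csInf_le ⟨0, by rintro - ⟨V, rfl⟩; exact norm_nonneg _⟩ ⟨U, rfl⟩

theorem dUNI_le_of_apply_eq_smul {ι : Type*} {R : H →L[ℂ] H} {R' : H' →L[ℂ] H'}
    {b : HilbertBasis ι ℂ H} {b' : HilbertBasis ι ℂ H'} {c c' : ι → ℂ}
    (hR : ∀ i, R (b i) = c i • b i) (hR' : ∀ i, R' (b' i) = c' i • b' i)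
    {M : ℝ} (hM : 0 ≤ M) (hc : ∀ i, ‖c' i - c i‖ ≤ M) :
    dUNI R R' ≤ M := by
  set U := b.repr.trans b'.repr.symm
  have hdiag : ∀ i, (R' - conjOp U R) (b' i) = (c' i - c i) • b' i := fun i => by
    rw [sub_apply, ← b.repr_trans_repr_symm_apply b' i, conjOp_apply_map,
      hR, map_smul, b.repr_trans_repr_symm_apply, hR', sub_smul]
  exact (dUNI_le R R' U).trans (b'.opNorm_le_of_apply_eq_smul hM hdiag hc)

end UnitaryDistance

open Filter in
theorem dUNI_le_dSPEC_general
    {H H' : Type*}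
    [NormedAddCommGroup H] [InnerProductSpace ℂ H]
    [NormedAddCommGroup H'] [InnerProductSpace ℂ H']
    (R : H →L[ℂ] H) (R' : H' →L[ℂ] H')
    (μ μ' : ℕ → ℝ)
    (ψ : HilbertBasis ℕ ℂ H) (ψ' : HilbertBasis ℕ ℂ H')
    (heig : ∀ k, R (ψ k) = (μ k : ℂ) • ψ k)
    (heig' : ∀ k, R' (ψ' k) = (μ' k : ℂ) • ψ' k) :
    dUNI R R' ≤ ⨆ k, |μ k - μ' k| := by
  have hbdd : BddAbove (Set.range fun k => |μ k - μ' k|) := by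
    refine ⟨‖R‖ + ‖R'‖, ?_⟩
    rintro - ⟨k, rfl⟩
    have hμ := ψ.norm_le_opNorm_of_apply_eq_smul (heig k)
    have hμ' := ψ'.norm_le_opNorm_of_apply_eq_smul (heig' k)
    rw [Complex.norm_real, Real.norm_eq_abs] at hμ hμ'
    exact (abs_sub _ _).trans (add_le_add hμ hμ')
  refine dUNI_le_of_apply_eq_smul heig heig' (Real.iSup_nonneg fun k => abs_nonneg _) fun k => ?_
  rw [← Complex.ofReal_sub, Complex.norm_real, Real.norm_eq_abs, abs_sub_comm]
  exact le_ciSup hbdd k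

open Filter in
theorem dUNI_le_dSPEC
    {H H' : Type*}
    [NormedAddCommGroup H] [InnerProductSpace ℂ H] [CompleteSpace H]
    [TopologicalSpace.SeparableSpace H]
    [NormedAddCommGroup H'] [InnerProductSpace ℂ H'] [CompleteSpace H']
    [TopologicalSpace.SeparableSpace H']
    (hinf : ¬ FiniteDimensional ℂ H) (hinf' : ¬ FiniteDimensional ℂ H')
    (R : H →L[ℂ] H) (R' : H' →L[ℂ] H')
    (hc : IsCompactOperator R) (hc' : IsCompactOperator R')
    (hsa : IsSelfAdjoint R) (hsa' : IsSelfAdjoint R')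
    (hinj : Function.Injective R) (hinj' : Function.Injective R')
    (μ μ' : ℕ → ℝ)
    (hpos : ∀ k, 0 < μ k) (hpos' : ∀ k, 0 < μ' k)
    (hle : ∀ k, μ k ≤ 1) (hle' : ∀ k, μ' k ≤ 1)
    (hmono : Antitone μ) (hmono' : Antitone μ')
    (hlim : Tendsto μ atTop (nhds 0)) (hlim' : Tendsto μ' atTop (nhds 0))
    (ψ : HilbertBasis ℕ ℂ H) (ψ' : HilbertBasis ℕ ℂ H')
    (heig : ∀ k, R (ψ k) = (μ k : ℂ) • ψ k)
    (heig' : ∀ k, R' (ψ' k) = (μ' k : ℂ) • ψ' k) :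
    dUNI R R' ≤ ⨆ k, |μ k - μ' k| :=
  dUNI_le_dSPEC_general R R' μ μ' ψ ψ' heig heig'
end

section
/- δ-quasi-unitary equivalence with δ = 0 implies J is unitary and R̃ = JRJ*: if ‖J‖ ≤ 1, ‖J'‖ ≤ 1, J' = J*, (id_H − J'J)R = 0, (id_{H̃} − JJ')R̃ = 0, JR = R̃J and J'R̃ = RJ', and R, R̃ are injective self-adjoint with spectrum in [0,1], then J*J = id_H, JJ* = id_{H̃}, and R̃ = JRJ*. -/
/-! An injective self-adjoint operator has dense range, since its range is orthogonal to its
kernel. Hence `(1 - J*J) R = 0` and `(1 - JJ*) R' = 0` force `J*J = 1` and `JJ* = 1`, and then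
`R' = R' J J* = J R J*`. -/

open ContinuousLinearMap

theorem ContinuousLinearMap.denseRange_of_injective_adjoint
    {𝕜 E F : Type*} [RCLike 𝕜]
    [NormedAddCommGroup E] [InnerProductSpace 𝕜 E] [CompleteSpace E]
    [NormedAddCommGroup F] [InnerProductSpace 𝕜 F] [CompleteSpace F]
    (T : E →L[𝕜] F) (h : Function.Injective (adjoint T)) : DenseRange T := by
  rw [DenseRange, ← T.coe_coe, ← LinearMap.coe_range,
    Submodule.dense_iff_topologicalClosure_eq_top, Submodule.topologicalClosure_eq_top_iff]
  exact T.orthogonal_range.trans (LinearMap.ker_eq_bot.mpr h)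

theorem ContinuousLinearMap.ext_of_comp_eq_of_denseRange
    {𝕜 E F G : Type*} [RCLike 𝕜] [NormedAddCommGroup E] [NormedSpace 𝕜 E]
    [NormedAddCommGroup F] [NormedSpace 𝕜 F] [NormedAddCommGroup G] [NormedSpace 𝕜 G]
    {R : E →L[𝕜] F} (hR : DenseRange R) {S T : F →L[𝕜] G} (h : S.comp R = T.comp R) :
    S = T :=
  coe_injective <| DFunLike.coe_injective <| hR.equalizer S.continuous T.continuous
    (congrArg DFunLike.coe h)

theorem ContinuousLinearMap.eq_one_of_sub_comp_eq_zero
    {𝕜 E : Type*} [RCLike 𝕜] [NormedAddCommGroup E] [NormedSpace 𝕜 E]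
    {R A : E →L[𝕜] E} (hR : DenseRange R) (h : (1 - A).comp R = 0) : A = 1 :=
  (sub_eq_zero.mp (ext_of_comp_eq_of_denseRange hR (h.trans (zero_comp R).symm))).symm

theorem zero_quasi_unitary_is_unitary_general
    {H H' : Type*}
    [NormedAddCommGroup H] [InnerProductSpace ℂ H] [CompleteSpace H]
    [NormedAddCommGroup H'] [InnerProductSpace ℂ H'] [CompleteSpace H']
    (R : H →L[ℂ] H) (R' : H' →L[ℂ] H')
    (hsa : IsSelfAdjoint R) (hsa' : IsSelfAdjoint R')
    (hinj : Function.Injective R) (hinj' : Function.Injective R')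
    (J : H →L[ℂ] H') (J' : H' →L[ℂ] H)
    (hJadj : J' = ContinuousLinearMap.adjoint J)
    (h1 : (1 - J'.comp J).comp R = 0)
    (h2 : (1 - J.comp J').comp R' = 0)
    (h3 : J.comp R = R'.comp J) :
    (ContinuousLinearMap.adjoint J).comp J = 1 ∧
    J.comp (ContinuousLinearMap.adjoint J) = 1 ∧
    R' = (J.comp R).comp (ContinuousLinearMap.adjoint J) := by
  subst hJadj
  have hR : DenseRange R := R.denseRange_of_injective_adjoint (by rwa [hsa.adjoint_eq])
  have hR' : DenseRange R' := R'.denseRange_of_injective_adjoint (by rwa [hsa'.adjoint_eq])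
  have hJJ' : J.comp (adjoint J) = 1 := eq_one_of_sub_comp_eq_zero hR' h2
  refine ⟨eq_one_of_sub_comp_eq_zero hR h1, hJJ', ?_⟩
  calc R' = (R'.comp J).comp (adjoint J) := by rw [comp_assoc, hJJ', one_def, comp_id]
    _ = (J.comp R).comp (adjoint J) := by rw [h3]

theorem zero_quasi_unitary_is_unitary
    {H H' : Type*}
    [NormedAddCommGroup H] [InnerProductSpace ℂ H] [CompleteSpace H]
    [NormedAddCommGroup H'] [InnerProductSpace ℂ H'] [CompleteSpace H']
    (R : H →L[ℂ] H) (R' : H' →L[ℂ] H')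
    (hsa : IsSelfAdjoint R) (hsa' : IsSelfAdjoint R')
    (hinj : Function.Injective R) (hinj' : Function.Injective R')
    (hs : spectrum ℝ R ⊆ Set.Icc (0:ℝ) 1) (hs' : spectrum ℝ R' ⊆ Set.Icc (0:ℝ) 1)
    (J : H →L[ℂ] H') (J' : H' →L[ℂ] H)
    (hJ : ‖J‖ ≤ 1) (hJ' : ‖J'‖ ≤ 1)
    (hJadj : J' = ContinuousLinearMap.adjoint J)
    (h1 : (1 - J'.comp J).comp R = 0)
    (h2 : (1 - J.comp J').comp R' = 0)
    (h3 : J.comp R = R'.comp J)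
    (h4 : J'.comp R' = R.comp J') :
    (ContinuousLinearMap.adjoint J).comp J = 1 ∧
    J.comp (ContinuousLinearMap.adjoint J) = 1 ∧
    R' = (J.comp R).comp (ContinuousLinearMap.adjoint J) :=
  zero_quasi_unitary_is_unitary_general R R' hsa hsa' hinj hinj' J J' hJadj h1 h2 h3
end

section
/- Quasi-unitary equivalence with J' replaced by J*: if R and R̃ are δ-quasi-unitarily equivalent with identification operators J and J' and δ ∈ [0,1], then ‖(id_H − J*J)R‖ ≤ 3δ, ‖(id_{H̃} − JJ*)R̃‖ ≤ 3δ, and ‖J*R̃ − RJ*‖ ≤ 3δ. -/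
/-! Replacing `J'` by `J*` in each of the three quantities adds an error term containing the
factor `J' - J*` (norm `≤ δ`) multiplied by `J` (norm `≤ 1 + δ`) and by `R` or `R̃`, whose norms
are `≤ 1` because a self-adjoint operator's norm is its spectral radius. Each error is thus at
most `δ (1 + δ) ≤ 2δ`. -/

open ContinuousLinearMap

lemma IsSelfAdjoint.norm_le_of_spectrum_subset_Icc {A : Type*} [CStarAlgebra A] {a : A}
    (ha : IsSelfAdjoint a) {r : ℝ} (hr : 0 ≤ r) (hs : spectrum ℝ a ⊆ Set.Icc (-r) r) :
    ‖a‖ ≤ r := by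
  rw [← ha.toReal_spectralRadius_eq_norm]
  refine ENNReal.toReal_le_of_le_ofReal hr (iSup₂_le fun k hk => ?_)
  rw [← enorm_eq_nnnorm, ← ofReal_norm]
  exact ENNReal.ofReal_le_ofReal (abs_le.mpr (hs hk))

section Perturbation

variable {𝕜 E F : Type*} [NontriviallyNormedField 𝕜]
  [NormedAddCommGroup E] [NormedSpace 𝕜 E] [NormedAddCommGroup F] [NormedSpace 𝕜 F]

lemma norm_one_sub_comp_comp_le_of_sub_left (A B : F →L[𝕜] E) (J : E →L[𝕜] F)
    (R : E →L[𝕜] E) :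
    ‖(1 - A.comp J).comp R‖ ≤ ‖(1 - B.comp J).comp R‖ + ‖B - A‖ * ‖J‖ * ‖R‖ := by
  have split : (1 - A.comp J).comp R = (1 - B.comp J).comp R + ((B - A).comp J).comp R := by
    ext x; simp
  rw [split]
  refine (norm_add_le _ _).trans (add_le_add_right ?_ _)
  exact (opNorm_comp_le _ _).trans (by gcongr; exact opNorm_comp_le _ _)

lemma norm_one_sub_comp_comp_le_of_sub_right (J : E →L[𝕜] F) (A B : F →L[𝕜] E)
    (R : F →L[𝕜] F) :
    ‖(1 - J.comp A).comp R‖ ≤ ‖(1 - J.comp B).comp R‖ + ‖J‖ * ‖B - A‖ * ‖R‖ := by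
  have split : (1 - J.comp A).comp R = (1 - J.comp B).comp R + (J.comp (B - A)).comp R := by
    ext x; simp
  rw [split]
  refine (norm_add_le _ _).trans (add_le_add_right ?_ _)
  exact (opNorm_comp_le _ _).trans (by gcongr; exact opNorm_comp_le _ _)

lemma norm_comp_sub_comp_le_of_sub (A B : F →L[𝕜] E) (R : E →L[𝕜] E) (R' : F →L[𝕜] F) :
    ‖A.comp R' - R.comp A‖ ≤ ‖B.comp R' - R.comp B‖ + ‖A - B‖ * (‖R'‖ + ‖R‖) := by
  have split :
      A.comp R' - R.comp A = (A - B).comp R' + (B.comp R' - R.comp B) + R.comp (B - A) := by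
    ext x; simp
  rw [split]
  grw [norm_add₃_le, opNorm_comp_le, opNorm_comp_le, norm_sub_rev B A]
  linarith

end Perturbation

theorem quasi_unitary_with_adjoint_general
    {H H' : Type*}
    [NormedAddCommGroup H] [InnerProductSpace ℂ H] [CompleteSpace H]
    [NormedAddCommGroup H'] [InnerProductSpace ℂ H'] [CompleteSpace H']
    (R : H →L[ℂ] H) (R' : H' →L[ℂ] H')
    (hsa : IsSelfAdjoint R) (hsa' : IsSelfAdjoint R')
    (hs : spectrum ℝ R ⊆ Set.Icc (0:ℝ) 1) (hs' : spectrum ℝ R' ⊆ Set.Icc (0:ℝ) 1)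
    (J : H →L[ℂ] H') (J' : H' →L[ℂ] H) (δ : ℝ)
    (hδ0 : 0 ≤ δ) (hδ1 : δ ≤ 1)
    (hJ : ‖J‖ ≤ 1 + δ)
    (hadj : ‖J' - ContinuousLinearMap.adjoint J‖ ≤ δ)
    (h1 : ‖(1 - J'.comp J).comp R‖ ≤ δ)
    (h2 : ‖(1 - J.comp J').comp R'‖ ≤ δ)
    (h4 : ‖J'.comp R' - R.comp J'‖ ≤ δ) :
    ‖(1 - (ContinuousLinearMap.adjoint J).comp J).comp R‖ ≤ 3 * δ ∧
    ‖(1 - J.comp (ContinuousLinearMap.adjoint J)).comp R'‖ ≤ 3 * δ ∧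
    ‖(ContinuousLinearMap.adjoint J).comp R' - R.comp (ContinuousLinearMap.adjoint J)‖ ≤ 3 * δ := by
  have hIcc : Set.Icc (0:ℝ) 1 ⊆ Set.Icc (-1) 1 := Set.Icc_subset_Icc (by norm_num) le_rfl
  have hR : ‖R‖ ≤ 1 := hsa.norm_le_of_spectrum_subset_Icc zero_le_one (hs.trans hIcc)
  have hR' : ‖R'‖ ≤ 1 := hsa'.norm_le_of_spectrum_subset_Icc zero_le_one (hs'.trans hIcc)
  have hadj' : ‖adjoint J - J'‖ ≤ δ := by rwa [norm_sub_rev]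
  refine ⟨?_, ?_, ?_⟩
  · grw [norm_one_sub_comp_comp_le_of_sub_left _ J' J R, h1, hadj, hJ, hR]
    nlinarith
  · grw [norm_one_sub_comp_comp_le_of_sub_right J _ J' R', h2, hadj, hJ, hR']
    nlinarith
  · grw [norm_comp_sub_comp_le_of_sub _ J' R R', h4, hadj', hR, hR']
    linarith

theorem quasi_unitary_with_adjoint
    {H H' : Type*}
    [NormedAddCommGroup H] [InnerProductSpace ℂ H] [CompleteSpace H]
    [NormedAddCommGroup H'] [InnerProductSpace ℂ H'] [CompleteSpace H']
    (R : H →L[ℂ] H) (R' : H' →L[ℂ] H')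
    (hsa : IsSelfAdjoint R) (hsa' : IsSelfAdjoint R')
    (hs : spectrum ℝ R ⊆ Set.Icc (0:ℝ) 1) (hs' : spectrum ℝ R' ⊆ Set.Icc (0:ℝ) 1)
    (J : H →L[ℂ] H') (J' : H' →L[ℂ] H) (δ : ℝ)
    (hδ0 : 0 ≤ δ) (hδ1 : δ ≤ 1)
    (hJ : ‖J‖ ≤ 1 + δ) (hJ' : ‖J'‖ ≤ 1 + δ)
    (hadj : ‖J' - ContinuousLinearMap.adjoint J‖ ≤ δ)
    (h1 : ‖(1 - J'.comp J).comp R‖ ≤ δ)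
    (h2 : ‖(1 - J.comp J').comp R'‖ ≤ δ)
    (h3 : ‖J.comp R - R'.comp J‖ ≤ δ)
    (h4 : ‖J'.comp R' - R.comp J'‖ ≤ δ) :
    ‖(1 - (ContinuousLinearMap.adjoint J).comp J).comp R‖ ≤ 3 * δ ∧
    ‖(1 - J.comp (ContinuousLinearMap.adjoint J)).comp R'‖ ≤ 3 * δ ∧
    ‖(ContinuousLinearMap.adjoint J).comp R' - R.comp (ContinuousLinearMap.adjoint J)‖ ≤ 3 * δ :=
  quasi_unitary_with_adjoint_general R R' hsa hsa' hs hs' J J' δ hδ0 hδ1 hJ hadj h1 h2 h4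
end

section
/- The Sobolev trace estimate on an interval: for every f ∈ H¹([0,ℓ]) (ℓ > 0), |f(0)|² ≤ coth(ℓ/2)(‖f‖²_{L²([0,ℓ])} + ‖f'‖²_{L²([0,ℓ])}). -/
/-!
The test function `φ x = sinh (ℓ - x) / sinh ℓ` solves `φ'' = φ` with `φ 0 = 1` and `φ ℓ = 0`.
Since `f` is absolutely continuous, integrating `(φ f)'` by parts gives
`f 0 = -∫ (φ' f + φ f')`, so Cauchy–Schwarz in `L² × L²` yields
`f 0 ^ 2 ≤ (∫ φ' ^ 2 + φ ^ 2) (‖f‖² + ‖f'‖²)`. The first factor equals `coth ℓ ≤ coth (ℓ / 2)`.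
-/

open MeasureTheory Set Real

theorem sq_integral_mul_add_mul_le {α : Type*} [MeasurableSpace α] {μ : Measure α}
    {u₁ u₂ v₁ v₂ : α → ℝ}
    (hu : Integrable (fun x => u₁ x ^ 2 + u₂ x ^ 2) μ)
    (hv : Integrable (fun x => v₁ x ^ 2 + v₂ x ^ 2) μ) :
    (∫ x, u₁ x * v₁ x + u₂ x * v₂ x ∂μ) ^ 2 ≤
      (∫ x, u₁ x ^ 2 + u₂ x ^ 2 ∂μ) * ∫ x, v₁ x ^ 2 + v₂ x ^ 2 ∂μ := by
  by_cases huv : Integrable (fun x => u₁ x * v₁ x + u₂ x * v₂ x) μ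
  · have hquad : ∀ c : ℝ, 0 ≤ (∫ x, u₁ x ^ 2 + u₂ x ^ 2 ∂μ) * (c * c)
        + (-2 * ∫ x, u₁ x * v₁ x + u₂ x * v₂ x ∂μ) * c + ∫ x, v₁ x ^ 2 + v₂ x ^ 2 ∂μ := by
      intro c
      have hexpand : ∀ x, (c * u₁ x - v₁ x) ^ 2 + (c * u₂ x - v₂ x) ^ 2 =
          c * c * (u₁ x ^ 2 + u₂ x ^ 2) - 2 * c * (u₁ x * v₁ x + u₂ x * v₂ x)
            + (v₁ x ^ 2 + v₂ x ^ 2) := fun x => by ring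
      calc 0 ≤ ∫ x, (c * u₁ x - v₁ x) ^ 2 + (c * u₂ x - v₂ x) ^ 2 ∂μ :=
            integral_nonneg fun x => by positivity
        _ = _ := by
          have hcross : Integrable (fun x => c * c * (u₁ x ^ 2 + u₂ x ^ 2)
              - 2 * c * (u₁ x * v₁ x + u₂ x * v₂ x)) μ := (hu.const_mul _).sub (huv.const_mul _)
          simp_rw [hexpand]
          rw [integral_add hcross hv,
            integral_sub (hu.const_mul _) (huv.const_mul _), integral_const_mul,
            integral_const_mul]
          ring
    have := discrim_le_zero hquad
    rw [discrim] at this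
    linarith
  · rw [integral_undef huv, sq, zero_mul]
    exact mul_nonneg (integral_nonneg fun x => by positivity)
      (integral_nonneg fun x => by positivity)

theorem integral_deriv_mul_add_mul_eq_of_eq_add_integral {f g φ : ℝ → ℝ} {a b : ℝ}
    (hg : IntervalIntegrable g volume a b)
    (hfg : ∀ x ∈ uIcc a b, f x = f a + ∫ t in a..x, g t)
    (hφ : AbsolutelyContinuousOnInterval φ a b) :
    ∫ x in a..b, deriv φ x * f x + φ x * g x = φ b * f b - φ a * f a := by
  set F : ℝ → ℝ := fun x => f a + ∫ t in a..x, g t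
  have hF : AbsolutelyContinuousOnInterval F a b :=
    contDiffOn_const.absolutelyContinuousOnInterval.add
      (hg.absolutelyContinuousOnInterval_intervalIntegral left_mem_uIcc)
  calc ∫ x in a..b, deriv φ x * f x + φ x * g x
      = ∫ x in a..b, deriv F x * φ x + F x * deriv φ x := by
        refine intervalIntegral.integral_congr_ae ?_
        filter_upwards [hg.ae_hasDerivAt_integral] with x hx hxI
        have hxI' := uIoc_subset_uIcc hxI
        rw [((hx hxI' a left_mem_uIcc).const_add (f a)).deriv, hfg x hxI']
        ring
    _ = F b * φ b - F a * φ a := hF.integral_deriv_mul_eq_sub hφ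
    _ = φ b * f b - φ a * f a := by
        have hFa : F a = f a := by simp [F]
        rw [hFa, show F b = f b from (hfg b right_mem_uIcc).symm]
        ring

theorem sq_sub_le_integral_deriv_sq_add_sq_mul {f g φ : ℝ → ℝ} {a b : ℝ} (hab : a ≤ b)
    (hg : IntegrableOn g (Icc a b))
    (hfg : ∀ x ∈ Icc a b, f x = f a + ∫ t in a..x, g t)
    (hφ : AbsolutelyContinuousOnInterval φ a b)
    (hφ2 : IntegrableOn (fun x => deriv φ x ^ 2 + φ x ^ 2) (Icc a b))
    (hf2 : IntegrableOn (fun x => f x ^ 2) (Icc a b))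
    (hg2 : IntegrableOn (fun x => g x ^ 2) (Icc a b)) :
    (φ b * f b - φ a * f a) ^ 2 ≤
      (∫ x in a..b, deriv φ x ^ 2 + φ x ^ 2) * ((∫ x in a..b, f x ^ 2) + ∫ x in a..b, g x ^ 2) := by
  rw [← uIcc_of_le hab] at hg hfg hφ2 hf2 hg2
  rw [← integral_deriv_mul_add_mul_eq_of_eq_add_integral hg.intervalIntegrable hfg hφ,
    ← intervalIntegral.integral_add hf2.intervalIntegrable hg2.intervalIntegrable]
  simp only [intervalIntegral.integral_of_le hab]
  exact sq_integral_mul_add_mul_le hφ2.intervalIntegrable.1 (hf2.add hg2).intervalIntegrable.1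

theorem integral_cosh_sq_add_sinh_sq (a b : ℝ) :
    ∫ x in a..b, cosh x ^ 2 + sinh x ^ 2 = sinh b * cosh b - sinh a * cosh a := by
  refine intervalIntegral.integral_eq_sub_of_hasDerivAt (f := fun x => sinh x * cosh x)
    (fun x _ => ?_)
    ((by fun_prop : Continuous fun x => cosh x ^ 2 + sinh x ^ 2).intervalIntegrable _ _)
  exact ((hasDerivAt_sinh x).fun_mul (hasDerivAt_cosh x)).congr_deriv (by ring)

theorem cosh_div_sinh_le_of_le {x y : ℝ} (hx : 0 < x) (hxy : x ≤ y) :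
    cosh y / sinh y ≤ cosh x / sinh x := by
  have hsx : 0 < sinh x := sinh_pos_iff.2 hx
  have hsy : 0 < sinh y := sinh_pos_iff.2 (hx.trans_le hxy)
  have hsyx : 0 ≤ sinh (y - x) := sinh_nonneg_iff.2 (sub_nonneg.2 hxy)
  rw [div_le_div_iff₀ hsy hsx]
  nlinarith [sinh_sub y x]

theorem hasDerivAt_sinh_sub_div (ℓ c x : ℝ) :
    HasDerivAt (fun y => sinh (ℓ - y) / c) (-cosh (ℓ - x) / c) x := by
  simpa [neg_div] using (((hasDerivAt_id' x).const_sub ℓ).sinh).div_const c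

theorem integral_deriv_sinh_sub_div_sq_add_sq {ℓ : ℝ} (hℓ : 0 < ℓ) :
    ∫ x in (0 : ℝ)..ℓ, deriv (fun y => sinh (ℓ - y) / sinh ℓ) x ^ 2
      + (sinh (ℓ - x) / sinh ℓ) ^ 2 = cosh ℓ / sinh ℓ := by
  have hs : sinh ℓ ≠ 0 := (sinh_pos_iff.2 hℓ).ne'
  simp only [fun x => (hasDerivAt_sinh_sub_div ℓ (sinh ℓ) x).deriv, div_pow, neg_sq,
    ← add_div, intervalIntegral.integral_div,
    intervalIntegral.integral_comp_sub_left (fun x => cosh x ^ 2 + sinh x ^ 2) ℓ,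
    integral_cosh_sq_add_sinh_sq]
  field_simp
  simp

open MeasureTheory intervalIntegral in
/-- Sobolev trace estimate on `[0, ℓ]`: if `f ∈ H¹([0,ℓ])`, i.e. `f` is the
continuous representative with weak (L²-) derivative `g`, then
`|f 0|² ≤ coth(ℓ/2) (‖f‖²_{L²} + ‖f'‖²_{L²})`. -/
theorem sobolev_trace_interval
    (ℓ : ℝ) (hℓ : 0 < ℓ) (f g : ℝ → ℝ)
    (hg : IntegrableOn g (Set.Icc 0 ℓ))
    (hg2 : IntegrableOn (fun x => (g x) ^ 2) (Set.Icc 0 ℓ))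
    (hf2 : IntegrableOn (fun x => (f x) ^ 2) (Set.Icc 0 ℓ))
    (hfg : ∀ x ∈ Set.Icc 0 ℓ, f x = f 0 + ∫ t in (0:ℝ)..x, g t) :
    |f 0| ^ 2 ≤ (Real.cosh (ℓ / 2) / Real.sinh (ℓ / 2)) *
      ((∫ x in (0:ℝ)..ℓ, (f x) ^ 2) + ∫ x in (0:ℝ)..ℓ, (g x) ^ 2) := by
  have hs : sinh ℓ ≠ 0 := (sinh_pos_iff.2 hℓ).ne'
  set φ : ℝ → ℝ := fun x => sinh (ℓ - x) / sinh ℓ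
  have hφ' : deriv φ = fun x => -cosh (ℓ - x) / sinh ℓ :=
    funext fun x => (hasDerivAt_sinh_sub_div ℓ (sinh ℓ) x).deriv
  have htrace := sq_sub_le_integral_deriv_sq_add_sq_mul hℓ.le hg hfg (φ := φ)
    (ContDiffOn.absolutelyContinuousOnInterval (by fun_prop))
    (by rw [hφ']; exact (by fun_prop : Continuous _).integrableOn_Icc) hf2 hg2
  rw [integral_deriv_sinh_sub_div_sq_add_sq hℓ] at htrace
  calc |f 0| ^ 2 = (φ ℓ * f ℓ - φ 0 * f 0) ^ 2 := by simp [φ, hs]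
    _ ≤ cosh ℓ / sinh ℓ * ((∫ x in (0:ℝ)..ℓ, f x ^ 2) + ∫ x in (0:ℝ)..ℓ, g x ^ 2) := htrace
    _ ≤ _ := by
      gcongr ?_ * _
      · exact add_nonneg (integral_nonneg hℓ.le fun x _ => sq_nonneg _)
          (integral_nonneg hℓ.le fun x _ => sq_nonneg _)
      · exact cosh_div_sinh_le_of_le (half_pos hℓ) (half_le_self hℓ.le)
end
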